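/- arXiv:2210.01566 — 5 statements merged into one kernel-verified Lean document; each statement's English description precedes it below -/
import Mathlib

section
/- For every ψ : H, the map x ↦ ⟪ψ, x⟫ = ∑' i, star (ψ i) * (x i) defines a continuous K-linear functional on H whose operator norm equals ‖ψ‖; precisely, there exists f : H →L[K] K with f x = ∑' i, star (ψ i) * (x i) for all x : H, and ‖f‖ = ‖ψ‖. (This is the isometry 𝒥_H : H → H′ of Proposition 3.38.) -/
open Filter

noncomputable section

variable (K : Type*) [NontriviallyNormedField K] [IsUltrametricDist K]
  [CompleteSpace K] [StarRing K] [NormedStarGroup K]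

/-- The p-adic coordinate Hilbert space: zero-convergent sequences in `K` with sup norm. -/
abbrev H := ZeroAtInftyContinuousMap ℕ K

/-- The standard basis vectors of `H K`. -/
def e (n : ℕ) : H K where
  toFun := fun m => if m = n then 1 else 0
  continuous_toFun := continuous_of_discreteTopology
  zero_at_infty' := by
    rw [cocompact_eq_atTop]
    refine Filter.Tendsto.congr' ?_ tendsto_const_nhds
    filter_upwards [Filter.eventually_gt_atTop n] with m hm
    simp [Nat.ne_of_gt hm]

/-- The canonical inner product on `H K`: `⟪x, y⟫ = ∑' i, star (x i) * y i`. -/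
def inner' (x y : H K) : K := ∑' i, star (x i) * y i

/-- A bounded operator is of trace class if its matrix entries vanish along the
cofinite filter of `ℕ × ℕ`. -/
def IsTraceClass (T : H K →L[K] H K) : Prop :=
  Tendsto (fun q : ℕ × ℕ => (T (e K q.2)) q.1) Filter.cofinite (nhds 0)

/-!
Each term `star (ψ i) * x i` has norm at most `‖ψ‖ * ‖x‖`, and in an ultrametric field a
convergent series is bounded by the supremum of its terms, so the functional has norm at most
`‖ψ‖`. Conversely it sends the basis vector `e n`, of norm at most one, to `star (ψ n)`, whose
norm is `‖ψ n‖`; taking the supremum over `n` gives `‖ψ‖`.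
-/

theorem ZeroAtInftyContinuousMap.tendsto_cofinite_zero {α β : Type*} [TopologicalSpace α]
    [DiscreteTopology α] [TopologicalSpace β] [Zero β] (f : ZeroAtInftyContinuousMap α β) :
    Tendsto f cofinite (nhds 0) := by
  simpa only [cocompact_eq_cofinite] using ZeroAtInftyContinuousMapClass.zero_at_infty f

section

variable {𝕜 : Type*} [NontriviallyNormedField 𝕜]

theorem norm_e_le_one (n : ℕ) : ‖e 𝕜 n‖ ≤ 1 := by
  refine (BoundedContinuousFunction.norm_le zero_le_one).mpr fun m => ?_
  change ‖if m = n then (1 : 𝕜) else 0‖ ≤ 1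
  split_ifs <;> simp

variable [StarRing 𝕜]

theorem inner'_smul_right (x y : H 𝕜) (c : 𝕜) : inner' 𝕜 x (c • y) = c * inner' 𝕜 x y := by
  simp only [inner', ZeroAtInftyContinuousMap.coe_smul, Pi.smul_apply, smul_eq_mul,
    mul_left_comm _ c, tsum_mul_left]

theorem inner'_e_right (x : H 𝕜) (n : ℕ) : inner' 𝕜 x (e 𝕜 n) = star (x n) := by
  refine (tsum_eq_single n fun i hi => ?_).trans ?_
  · change star (x i) * (if i = n then (1 : 𝕜) else 0) = 0
    simp [hi]
  · change star (x n) * (if n = n then (1 : 𝕜) else 0) = star (x n)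
    simp

variable [NormedStarGroup 𝕜]

theorem norm_star_mul_apply_le (x y : H 𝕜) (i : ℕ) : ‖star (x i) * y i‖ ≤ ‖x‖ * ‖y i‖ := by
  rw [norm_mul, norm_star]
  exact mul_le_mul_of_nonneg_right (x.toBCF.norm_coe_le_norm i) (norm_nonneg _)

variable [IsUltrametricDist 𝕜]

theorem norm_inner'_le (x y : H 𝕜) : ‖inner' 𝕜 x y‖ ≤ ‖x‖ * ‖y‖ :=
  IsUltrametricDist.norm_tsum_le_of_forall_le fun i =>
    (norm_star_mul_apply_le x y i).trans
      (mul_le_mul_of_nonneg_left (y.toBCF.norm_coe_le_norm i) (norm_nonneg _))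

variable [CompleteSpace 𝕜]

theorem summable_star_mul_apply (x y : H 𝕜) :
    Summable fun i => star (x i) * y i :=
  NonarchimedeanAddGroup.summable_of_tendsto_cofinite_zero <|
    squeeze_zero_norm (norm_star_mul_apply_le x y) <| by
      simpa using y.tendsto_cofinite_zero.norm.const_mul ‖x‖

theorem inner'_add_right (x y z : H 𝕜) :
    inner' 𝕜 x (y + z) = inner' 𝕜 x y + inner' 𝕜 x z := by
  simp only [inner', ZeroAtInftyContinuousMap.coe_add, Pi.add_apply, mul_add]
  exact (summable_star_mul_apply x y).tsum_add (summable_star_mul_apply x z)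

def innerSL' (x : H 𝕜) : H 𝕜 →L[𝕜] 𝕜 :=
  LinearMap.mkContinuous
    { toFun := inner' 𝕜 x
      map_add' := inner'_add_right x
      map_smul' := fun c y => inner'_smul_right x y c }
    ‖x‖ (norm_inner'_le x)

theorem innerSL'_apply (x y : H 𝕜) : innerSL' x y = inner' 𝕜 x y := rfl

theorem norm_innerSL' (x : H 𝕜) : ‖innerSL' x‖ = ‖x‖ := by
  refine le_antisymm (LinearMap.mkContinuous_norm_le _ (norm_nonneg x) _) ?_
  rw [← ZeroAtInftyContinuousMap.norm_toBCF_eq_norm]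
  refine (BoundedContinuousFunction.norm_le (innerSL' x).opNorm_nonneg).mpr fun n => ?_
  calc ‖x n‖ = ‖innerSL' x (e 𝕜 n)‖ := by
        rw [innerSL'_apply, inner'_e_right, norm_star]
    _ ≤ ‖innerSL' x‖ * ‖e 𝕜 n‖ := (innerSL' x).le_opNorm _
    _ ≤ ‖innerSL' x‖ := mul_le_of_le_one_right (innerSL' x).opNorm_nonneg (norm_e_le_one n)

end

/-- For every `ψ : H`, `x ↦ ⟪ψ, x⟫` is a continuous linear functional of norm `‖ψ‖`. -/
theorem stmt1 (ψ : H K) :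
    ∃ f : H K →L[K] K, (∀ x : H K, f x = ∑' i, star (ψ i) * x i) ∧ ‖f‖ = ‖ψ‖ :=
  ⟨innerSL' ψ, fun _ => rfl, norm_innerSL' ψ⟩
end
end

section
/- (Theorem 4.2, norm formula.) For every continuous K-linear operator T : H →L[K] H one has ‖T‖ = ⨆ n : ℕ, ‖T (e n)‖ and also ‖T‖ = ⨆ q : ℕ × ℕ, ‖(T (e q.2)) q.1‖; i.e. the operator norm of a bounded operator equals the supremum of the norms of its columns, which equals the supremum of the norms (absolute values) of its matrix entries. -/
open Filter

noncomputable section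

variable (K : Type*) [NontriviallyNormedField K] [IsUltrametricDist K]
  [CompleteSpace K] [StarRing K] [NormedStarGroup K]

/-!
Every `x ∈ H` is the (unconditionally convergent) sum `∑ₙ x n • e n` with `‖x n‖ ≤ ‖x‖`, so by
continuity and the ultrametric inequality `‖T x‖ ≤ supₙ ‖x n‖ ‖T (e n)‖ ≤ (supₙ ‖T (e n)‖) ‖x‖`;
the reverse bound holds because `‖e n‖ = 1`. Since the norm of each column is the supremum of its
entries, the supremum over the columns is the supremum over all entries.
-/

open scoped ZeroAtInfty

namespace ZeroAtInftyContinuousMap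

variable {α E ι : Type*} [TopologicalSpace α] [SeminormedAddCommGroup E]

theorem norm_apply_le (f : C₀(α, E)) (x : α) : ‖f x‖ ≤ ‖f‖ := by
  rw [← norm_toBCF_eq_norm]
  exact f.toBCF.norm_coe_le_norm x

theorem norm_eq_iSup_norm (f : C₀(α, E)) : ‖f‖ = ⨆ x, ‖f x‖ := by
  rw [← norm_toBCF_eq_norm]
  exact f.toBCF.norm_eq_iSup_norm

theorem continuous_eval_const (x : α) : Continuous fun f : C₀(α, E) => f x :=
  (LipschitzWith.of_dist_le_mul (K := 1) fun f g => by
    rw [NNReal.coe_one, one_mul, ← dist_toBCF_eq_dist]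
    exact f.toBCF.dist_coe_le_dist (g := g.toBCF) x).continuous

instance [IsUltrametricDist E] : IsUltrametricDist C₀(α, E) :=
  IsUltrametricDist.isUltrametricDist_of_forall_norm_add_le_max_norm fun f g => by
    rw [← norm_toBCF_eq_norm, BoundedContinuousFunction.norm_le (by positivity)]
    intro x
    exact (IsUltrametricDist.norm_add_le_max (f x) (g x)).trans
      (max_le_max (f.norm_apply_le x) (g.norm_apply_le x))

theorem iSup_norm_eq_iSup_norm_apply (f : ι → C₀(α, E))
    (hf : BddAbove (Set.range fun i => ‖f i‖)) :
    ⨆ i, ‖f i‖ = ⨆ q : α × ι, ‖f q.2 q.1‖ := by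
  have hbdd : BddAbove (Set.range fun q : α × ι => ‖f q.2 q.1‖) := by
    obtain ⟨C, hC⟩ := hf
    exact ⟨C, by rintro _ ⟨q, rfl⟩; exact (norm_apply_le _ _).trans (hC ⟨q.2, rfl⟩)⟩
  apply le_antisymm
  · refine Real.iSup_le (fun i => ?_) (Real.iSup_nonneg fun _ => norm_nonneg _)
    rw [norm_eq_iSup_norm]
    exact Real.iSup_le (fun x => le_ciSup hbdd (x, i)) (Real.iSup_nonneg fun _ => norm_nonneg _)
  · exact Real.iSup_le (fun q => (norm_apply_le _ _).trans (le_ciSup hf q.2))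
      (Real.iSup_nonneg fun _ => norm_nonneg _)

end ZeroAtInftyContinuousMap

section Basis

omit [StarRing K] [NormedStarGroup K]

omit [IsUltrametricDist K] [CompleteSpace K] in
theorem e_apply (n m : ℕ) : e K n m = if m = n then 1 else 0 := rfl

omit [IsUltrametricDist K] [CompleteSpace K] in
theorem norm_e (n : ℕ) : ‖e K n‖ = 1 := by
  apply le_antisymm
  · rw [ZeroAtInftyContinuousMap.norm_eq_iSup_norm]
    refine Real.iSup_le (fun m => ?_) zero_le_one
    rw [e_apply]
    split_ifs <;> simp
  · simpa [e_apply] using ZeroAtInftyContinuousMap.norm_apply_le (e K n) n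

theorem hasSum_apply_smul_e (x : H K) : HasSum (fun n => x n • e K n) x := by
  have hx : Tendsto (fun n => x n) cofinite (nhds 0) := by
    simpa only [cocompact_eq_atTop, ← Nat.cofinite_eq_atTop] using zero_at_infty x
  have hterms : Tendsto (fun n => x n • e K n) cofinite (nhds 0) := by
    rw [tendsto_zero_iff_norm_tendsto_zero] at hx ⊢
    simpa only [norm_smul, norm_e, mul_one] using hx
  obtain ⟨y, hy⟩ := NonarchimedeanAddGroup.summable_of_tendsto_cofinite_zero hterms
  suffices y = x from this ▸ hy
  ext m
  have hy_m : HasSum (fun n => (x n • e K n) m) (y m) :=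
    hy.map (AddMonoidHom.mk' (fun f : H K => f m) fun _ _ => rfl)
      (ZeroAtInftyContinuousMap.continuous_eval_const m)
  refine hy_m.unique ?_
  convert hasSum_single m fun n hn => ?_ using 1
  · simp [e_apply]
  · simp [e_apply, Ne.symm hn]

omit [IsUltrametricDist K] [CompleteSpace K] in
theorem norm_apply_e_le_opNorm {F : Type*} [SeminormedAddCommGroup F] [NormedSpace K F]
    (T : H K →L[K] F) (n : ℕ) : ‖T (e K n)‖ ≤ ‖T‖ := by
  simpa only [norm_e, mul_one] using T.le_opNorm (e K n)

omit [IsUltrametricDist K] [CompleteSpace K] in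
theorem bddAbove_range_norm_apply_e {F : Type*} [SeminormedAddCommGroup F] [NormedSpace K F]
    (T : H K →L[K] F) : BddAbove (Set.range fun n => ‖T (e K n)‖) :=
  ⟨‖T‖, by rintro _ ⟨n, rfl⟩; exact norm_apply_e_le_opNorm K T n⟩

theorem opNorm_eq_iSup_norm_apply_e {F : Type*} [NormedAddCommGroup F] [NormedSpace K F]
    [IsUltrametricDist F] (T : H K →L[K] F) : ‖T‖ = ⨆ n, ‖T (e K n)‖ := by
  have hC : 0 ≤ ⨆ n, ‖T (e K n)‖ := Real.iSup_nonneg fun _ => norm_nonneg _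
  refine le_antisymm (T.opNorm_le_bound hC fun x => ?_)
    (Real.iSup_le (norm_apply_e_le_opNorm K T) (norm_nonneg T))
  rw [← ((hasSum_apply_smul_e K x).mapL T).tsum_eq]
  refine IsUltrametricDist.norm_tsum_le_of_forall_le_of_nonneg (by positivity) fun n => ?_
  rw [map_smul, norm_smul, mul_comm]
  exact mul_le_mul (le_ciSup (bddAbove_range_norm_apply_e K T) n) (x.norm_apply_le n)
    (norm_nonneg _) hC

end Basis

/-- The operator norm of a bounded operator equals the supremum of the norms of its
columns, which equals the supremum of the norms of its matrix entries. -/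
theorem stmt2 (T : H K →L[K] H K) :
    ‖T‖ = ⨆ n : ℕ, ‖T (e K n)‖ ∧ ‖T‖ = ⨆ q : ℕ × ℕ, ‖(T (e K q.2)) q.1‖ := by
  have hcols := opNorm_eq_iSup_norm_apply_e K T
  exact ⟨hcols, hcols.trans <| ZeroAtInftyContinuousMap.iSup_norm_eq_iSup_norm_apply _ <|
    bddAbove_range_norm_apply_e K T⟩
end
end

section
/- (Lemma 6.8.) Let A, T : ℕ → ℕ → K be infinite matrices such that: (a) there exists α : ℝ with ‖A l m‖ ≤ α for all l, m; (b) for every m, Tendsto (fun l => A l m) atTop (nhds 0); (c) Tendsto (fun q : ℕ × ℕ => T q.1 q.2) Filter.cofinite (nhds 0). Then for every (l, n) ∈ ℕ × ℕ the series ∑ m, A l m * T m n converges (Summable (fun m => A l m * T m n)), and the resulting matrix S l n := ∑' m, A l m * T m n satisfies Tendsto (fun q : ℕ × ℕ => S q.1 q.2) Filter.cofinite (nhds 0). -/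
open Filter

/-- In a complete ultrametric field, a sequence tending to zero is summable. -/
lemma stmt8_summable_of_tendsto_zero {K : Type*} [NontriviallyNormedField K]
    [IsUltrametricDist K] [CompleteSpace K] {f : ℕ → K}
    (hf : Tendsto f atTop (nhds 0)) : Summable f := by
  rw [summable_iff_vanishing_norm]
  intro ε hε
  rw [NormedAddCommGroup.tendsto_nhds_zero] at hf
  obtain ⟨N, hN⟩ := (hf ε hε).exists_forall_of_atTop
  refine ⟨Finset.range N, fun t ht => ?_⟩
  rcases t.eq_empty_or_nonempty with rfl | hne
  · simpa using hε
  · obtain ⟨i, hi, hle⟩ :=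
      IsUltrametricDist.exists_norm_finset_sum_le_of_nonempty hne f
    refine hle.trans_lt (hN i ?_)
    have := Finset.disjoint_left.mp ht hi
    simpa [Finset.mem_range, not_lt] using this

/-- If `A` has bounded entries and zero-convergent columns and `T` vanishes along the
cofinite filter, then the matrix product `S = A·T` is defined and vanishes along the
cofinite filter. -/
theorem stmt8 (K : Type*) [NontriviallyNormedField K] [IsUltrametricDist K]
    [CompleteSpace K] (A T : ℕ → ℕ → K)
    (hA : ∃ α : ℝ, ∀ l m : ℕ, ‖A l m‖ ≤ α)
    (hAcol : ∀ m : ℕ, Tendsto (fun l => A l m) atTop (nhds 0))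
    (hT : Tendsto (fun q : ℕ × ℕ => T q.1 q.2) Filter.cofinite (nhds 0)) :
    (∀ l n : ℕ, Summable (fun m => A l m * T m n)) ∧
    Tendsto (fun q : ℕ × ℕ => ∑' m, A q.1 m * T m q.2) Filter.cofinite (nhds 0) := by
  obtain ⟨α, hα⟩ := hA
  set β : ℝ := max α 1 with hβdef
  have hβpos : 0 < β := lt_of_lt_of_le one_pos (le_max_right _ _)
  have hAβ : ∀ l m, ‖A l m‖ ≤ β := fun l m => (hα l m).trans (le_max_left _ _)
  -- columns of `T` tend to zero
  have hTcol : ∀ n : ℕ, Tendsto (fun m => T m n) atTop (nhds 0) := by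
    intro n
    rw [← Nat.cofinite_eq_atTop]
    have hinj : Function.Injective (fun m => ((m, n) : ℕ × ℕ)) :=
      fun a b h => (Prod.ext_iff.mp h).1
    exact hT.comp hinj.tendsto_cofinite
  -- each entry of the product is given by a summable series
  have hterm : ∀ l n : ℕ, Tendsto (fun m => A l m * T m n) atTop (nhds 0) := by
    intro l n
    have hnorm : ∀ m, ‖A l m * T m n‖ ≤ β * ‖T m n‖ := by
      intro m
      rw [norm_mul]
      exact mul_le_mul_of_nonneg_right (hAβ l m) (norm_nonneg _)
    have : Tendsto (fun m => β * ‖T m n‖) atTop (nhds 0) := by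
      simpa using ((hTcol n).norm.const_mul β)
    exact squeeze_zero_norm hnorm this
  have hsum : ∀ l n : ℕ, Summable (fun m => A l m * T m n) :=
    fun l n => stmt8_summable_of_tendsto_zero (hterm l n)
  refine ⟨hsum, ?_⟩
  -- columns of the product tend to zero as `l → ∞`
  have hScol : ∀ n : ℕ,
      Tendsto (fun l => ∑' m, A l m * T m n) atTop (nhds 0) := by
    intro n
    rw [NormedAddCommGroup.tendsto_nhds_zero]
    intro ε hε
    -- choose M such that the tail of the T-column is small
    have hδ : 0 < ε / 2 / β := div_pos (half_pos hε) hβpos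
    have := (NormedAddCommGroup.tendsto_nhds_zero.mp (hTcol n)) _ hδ
    obtain ⟨M, hM⟩ := this.exists_forall_of_atTop
    -- the tail of each series is uniformly bounded by ε/2
    have htail : ∀ l, ‖∑' m, A l (m + M) * T (m + M) n‖ ≤ ε / 2 := by
      intro l
      refine IsUltrametricDist.norm_tsum_le_of_forall_le_of_nonneg
        (le_of_lt (half_pos hε)) (fun m => ?_)
      rw [norm_mul]
      calc ‖A l (m + M)‖ * ‖T (m + M) n‖ ≤ β * (ε / 2 / β) := by
            exact mul_le_mul (hAβ _ _) (le_of_lt (hM (m + M) (Nat.le_add_left _ _)))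
              (norm_nonneg _) (le_of_lt hβpos)
        _ = ε / 2 := by rw [mul_comm, div_mul_cancel₀ _ (ne_of_gt hβpos)]
    -- the head tends to zero
    have hhead : Tendsto (fun l => ∑ m ∈ Finset.range M, A l m * T m n)
        atTop (nhds 0) := by
      have := tendsto_finset_sum (Finset.range M)
        (fun m _ => ((hAcol m).mul_const (T m n)))
      simpa using this
    rw [NormedAddCommGroup.tendsto_nhds_zero] at hhead
    filter_upwards [hhead _ (half_pos hε)] with l hl
    have hsplit : (∑' m, A l m * T m n) =
        (∑ m ∈ Finset.range M, A l m * T m n) + ∑' m, A l (m + M) * T (m + M) n :=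
      (Summable.sum_add_tsum_nat_add M (hsum l n)).symm
    calc ‖∑' m, A l m * T m n‖
        ≤ ‖∑ m ∈ Finset.range M, A l m * T m n‖ + ‖∑' m, A l (m + M) * T (m + M) n‖ := by
          rw [hsplit]; exact norm_add_le _ _
      _ < ε / 2 + ε / 2 := by
          exact add_lt_add_of_lt_of_le hl (htail l)
      _ = ε := add_halves ε
  -- now prove the cofinite convergence of the product matrix
  rw [NormedAddCommGroup.tendsto_nhds_zero]
  intro ε hε
  have hδ : 0 < ε / 2 / β := div_pos (half_pos hε) hβpos
  have hFfin : {q : ℕ × ℕ | ¬ ‖T q.1 q.2‖ < ε / 2 / β}.Finite := by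
    have := (NormedAddCommGroup.tendsto_nhds_zero.mp hT) _ hδ
    simpa [Filter.eventually_cofinite] using this
  -- bound on the second coordinates of the bad pairs of T
  obtain ⟨N, hN⟩ := (hFfin.image Prod.snd).bddAbove
  -- for n > N, all entries of the T-column are small, hence S is small
  have hbig : ∀ l n : ℕ, N < n → ‖∑' m, A l m * T m n‖ ≤ ε / 2 := by
    intro l n hn
    refine IsUltrametricDist.norm_tsum_le_of_forall_le_of_nonneg
      (le_of_lt (half_pos hε)) (fun m => ?_)
    have hTsmall : ‖T m n‖ < ε / 2 / β := by
      by_contra hcon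
      have : n ≤ N := hN ⟨(m, n), hcon, rfl⟩
      exact absurd this (not_le.mpr hn)
    rw [norm_mul]
    calc ‖A l m‖ * ‖T m n‖ ≤ β * (ε / 2 / β) :=
          mul_le_mul (hAβ _ _) (le_of_lt hTsmall) (norm_nonneg _) (le_of_lt hβpos)
      _ = ε / 2 := by rw [mul_comm, div_mul_cancel₀ _ (ne_of_gt hβpos)]
  rw [Filter.eventually_cofinite]
  have hcolfin : ∀ n : ℕ, {l : ℕ | ¬ ‖∑' m, A l m * T m n‖ < ε}.Finite := by
    intro n
    have := (NormedAddCommGroup.tendsto_nhds_zero.mp (hScol n)) _ hε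
    rw [← Nat.cofinite_eq_atTop, Filter.eventually_cofinite] at this
    exact this
  refine Set.Finite.subset
    (Set.Finite.biUnion (Set.finite_Iic N)
      (fun n _ => ((hcolfin n).prod (Set.finite_singleton n)))) ?_
  rintro ⟨l, n⟩ hq
  simp only [Set.mem_setOf_eq] at hq
  have hnN : n ≤ N := by
    by_contra hcon
    exact hq (lt_of_le_of_lt (hbig l n (not_le.mp hcon)) (half_lt_self hε))
  exact Set.mem_biUnion hnN ⟨hq, rfl⟩
end

section
/- (Section 7, SOVMs induce p-adic probability distributions from trace-induced states.) Let A : ℕ → (H →L[K] H) be a selfadjoint-operator-valued measure: (a) each A i is self-adjoint, ⟪x, A i y⟫ = ⟪A i x, y⟫ for all x, y; (b) the family is norm-bounded, i.e. there is C : ℝ with ‖A i‖ ≤ C for all i; (c) it sums to the identity in the weak operator topology: for all x, y : H, HasSum (fun i => ⟪x, A i y⟫) ⟪x, y⟫. Let S : H →L[K] H be a statistical operator: S is of trace class, self-adjoint (⟪x, S y⟫ = ⟪S x, y⟫ for all x, y), and tr S = 1 (∑' m, (S (e m)) m = 1). Then the traces tr(A i ∘ S) form a p-adic probability distribution: HasSum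 (fun i => ∑' m, ((A i) (S (e m))) m) 1. -/
/-!
Consider the double series `∑_{i,m} (A i (S e_m))_m`. Weak summation of the `A i` against `e_m`
sums its `m`-th column to `(S e_m)_m`, and `‖(A i (S e_m))_m‖ ≤ C ‖S e_m‖`, where `‖S e_m‖ → 0`
by the trace-class condition; so its terms tend to `0` along the cofinite filter of `ℕ × ℕ`.
Over a complete nonarchimedean field this makes the double series summable, so it may be summed
in either order: by columns it gives `tr S = 1`, by rows the traces `tr (A i ∘ S)`.
-/

open Filter

noncomputable section

variable (K : Type*) [NontriviallyNormedField K] [IsUltrametricDist K]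
  [CompleteSpace K] [StarRing K] [NormedStarGroup K]

open Topology

theorem tendsto_cofinite_zero_prod_of_fiberwise {α β E : Type*} [SeminormedAddGroup E]
    {f : α × β → E} {g : β → ℝ} (hfib : ∀ b, Tendsto (fun a => f (a, b)) cofinite (𝓝 0))
    (hg : Tendsto g cofinite (𝓝 0)) (hfg : ∀ a b, ‖f (a, b)‖ ≤ g b) :
    Tendsto f cofinite (𝓝 0) := by
  rw [NormedAddGroup.tendsto_nhds_zero]
  intro ε hε
  have hB : {b | ¬ g b < ε}.Finite := eventually_cofinite.1 (hg.eventually_lt_const hε)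
  have hfin : ∀ b, {a | ¬ ‖f (a, b)‖ < ε}.Finite := fun b =>
    eventually_cofinite.1 ((NormedAddGroup.tendsto_nhds_zero.1 (hfib b)) ε hε)
  refine eventually_cofinite.2 <|
    (hB.biUnion fun b _ => (hfin b).image (·, b)).subset ?_
  rintro ⟨a, b⟩ hab
  have hb : ¬ g b < ε := fun hb => hab ((hfg a b).trans_lt hb)
  exact Set.mem_biUnion hb ⟨a, hab, rfl⟩

theorem ZeroAtInftyContinuousMap.tendsto_norm_cofinite_zero {α β E : Type*} [TopologicalSpace α]
    [SeminormedAddCommGroup E] {x : β → ZeroAtInftyContinuousMap α E}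
    (h : Tendsto (fun q : α × β => x q.2 q.1) cofinite (𝓝 0)) :
    Tendsto (fun b => ‖x b‖) cofinite (𝓝 0) := by
  rw [NormedAddGroup.tendsto_nhds_zero]
  intro ε hε
  have hbig : {q : α × β | ¬ ‖x q.2 q.1‖ < ε / 2}.Finite :=
    eventually_cofinite.1 (NormedAddGroup.tendsto_nhds_zero.1 h _ (half_pos hε))
  refine eventually_cofinite.2 <| (hbig.image Prod.snd).subset fun b hb => ?_
  by_contra hsmall
  have hle : ‖x b‖ ≤ ε / 2 := by
    rw [← norm_toBCF_eq_norm]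
    refine (BoundedContinuousFunction.norm_le (half_pos hε).le).2 fun a => ?_
    by_contra ha
    exact hsmall ⟨(a, b), (not_le.1 ha).not_gt, rfl⟩
  exact hb (by rw [norm_norm]; linarith)

theorem inner'_e_left {𝕜 : Type*} [NontriviallyNormedField 𝕜] [StarRing 𝕜] (m : ℕ) (y : H 𝕜) :
    inner' 𝕜 (e 𝕜 m) y = y m := by
  rw [inner', tsum_eq_single m fun j hj => by simp [e, hj]]
  simp [e]

theorem IsTraceClass.tendsto_norm_apply_e {𝕜 : Type*} [NontriviallyNormedField 𝕜]
    {T : H 𝕜 →L[𝕜] H 𝕜} (hT : IsTraceClass 𝕜 T) :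
    Tendsto (fun m => ‖T (e 𝕜 m)‖) cofinite (𝓝 0) :=
  ZeroAtInftyContinuousMap.tendsto_norm_cofinite_zero hT

theorem stmt14 (A : ℕ → (H K →L[K] H K))
    (hbd : ∃ C : ℝ, ∀ i : ℕ, ‖A i‖ ≤ C)
    (hsum : ∀ x y : H K, HasSum (fun i => inner' K x (A i y)) (inner' K x y))
    (S : H K →L[K] H K) (hS : IsTraceClass K S)
    (hStr : (∑' m, (S (e K m)) m) = 1) :
    HasSum (fun i => ∑' m, ((A i) (S (e K m))) m) 1 := by
  obtain ⟨C, hC⟩ := hbd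
  set f : ℕ → ℕ → K := fun i m => (A i (S (e K m))) m
  have hcol : ∀ m, HasSum (fun i => f i m) ((S (e K m)) m) := fun m => by
    simpa only [inner'_e_left] using hsum (e K m) (S (e K m))
  have hbound : ∀ i m, ‖f i m‖ ≤ C * ‖S (e K m)‖ := fun i m =>
    calc ‖f i m‖ ≤ ‖A i (S (e K m))‖ := (A i (S (e K m))).toBCF.norm_coe_le_norm m
      _ ≤ ‖A i‖ * ‖S (e K m)‖ := (A i).le_opNorm _
      _ ≤ C * ‖S (e K m)‖ := by gcongr; exact hC i
  have hf : Summable (Function.uncurry f) :=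
    NonarchimedeanAddGroup.summable_of_tendsto_cofinite_zero <|
      tendsto_cofinite_zero_prod_of_fiberwise (fun m => (hcol m).summable.tendsto_cofinite_zero)
        (by simpa using hS.tendsto_norm_apply_e.const_mul C) hbound
  have htotal : ∑' i, ∑' m, f i m = 1 := by
    rw [← hf.tsum_comm, ← hStr]
    exact tsum_congr fun m => (hcol m).tsum_eq
  exact htotal ▸ hf.prod.hasSum
end
end

section
/- (Section 7, Proposition (K1)⟺(K2)⟺(K3): ℚ_p-convex maps are affine.) Let X and Y be modules over the p-adic numbers ℚ_[p] (p a prime). A map g : X → Y is ℚ_p-convex if for all x₁ x₂ : X and all λ₁ λ₂ : ℤ_[p] (p-adic integers, i.e. elements of ℚ_[p] of norm ≤ 1) with (λ₁ : ℚ_[p]) + (λ₂ : ℚ_[p]) = 1 one has g ((λ₁ : ℚ_[p]) • x₁ + (λ₂ : ℚ_[p]) • x₂) = (λ₁ : ℚ_[p]) • g x₁ + (λ₂ : ℚ_[p]) • g x₂. Then g is ℚ_p-convex if and only if there exists a ℚ_[p]-linear map h : X →ₗ[ℚ_[p]] Y with g x = g 0 + h x for all x : X (equivalently, g is ℚ_p-affine).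 -/
/-- A map between `ℚ_[p]`-modules is `ℚ_p`-convex iff it is `ℚ_p`-affine, i.e. a
translate of a `ℚ_[p]`-linear map. -/
theorem stmt19 (p : ℕ) [Fact p.Prime] (X Y : Type*)
    [AddCommGroup X] [Module ℚ_[p] X] [AddCommGroup Y] [Module ℚ_[p] Y]
    (g : X → Y) :
    (∀ (x₁ x₂ : X) (l₁ l₂ : ℤ_[p]), (l₁ : ℚ_[p]) + (l₂ : ℚ_[p]) = 1 →
      g ((l₁ : ℚ_[p]) • x₁ + (l₂ : ℚ_[p]) • x₂) =
        (l₁ : ℚ_[p]) • g x₁ + (l₂ : ℚ_[p]) • g x₂) ↔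
    ∃ h : X →ₗ[ℚ_[p]] Y, ∀ x : X, g x = g 0 + h x := by
  have hp1 : (1 : ℝ) < (p : ℝ) := by
    exact_mod_cast (Fact.out : p.Prime).one_lt
  have hp0 : (p : ℚ_[p]) ≠ 0 := by
    exact_mod_cast (Fact.out : p.Prime).ne_zero
  constructor
  · intro hconv
    set f : X → Y := fun x => g x - g 0 with hf
    -- ℤ_p homogeneity
    have hZ : ∀ (l : ℤ_[p]) (x : X), f ((l : ℚ_[p]) • x) = (l : ℚ_[p]) • f x := by
      intro l x
      have h1 := hconv x 0 l (1 - l) (by push_cast; ring)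
      simp only [smul_zero, add_zero] at h1
      have hc : ((1 - l : ℤ_[p]) : ℚ_[p]) = 1 - (l : ℚ_[p]) := by push_cast; ring
      rw [hc] at h1
      simp only [hf, h1, sub_smul, one_smul, smul_sub]
      abel
    -- ℚ_p homogeneity
    have hQ : ∀ (c : ℚ_[p]) (x : X), f (c • x) = c • f x := by
      intro c x
      obtain ⟨n, hn⟩ := pow_unbounded_of_one_lt ‖c‖ hp1
      have hmem : ‖c * (p : ℚ_[p]) ^ n‖ ≤ 1 := by
        rw [norm_mul, norm_pow, Padic.norm_p, inv_pow,
          mul_inv_le_iff₀ (by positivity), one_mul]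
        exact le_of_lt hn
      have hpn : ‖((p : ℚ_[p]) ^ n)‖ ≤ 1 := by
        rw [norm_pow, Padic.norm_p, inv_pow]
        exact inv_le_one_of_one_le₀ (one_le_pow₀ (le_of_lt hp1))
      obtain ⟨a, ha⟩ : ∃ a : ℤ_[p], (a : ℚ_[p]) = c * (p : ℚ_[p]) ^ n :=
        ⟨⟨c * (p : ℚ_[p]) ^ n, hmem⟩, rfl⟩
      obtain ⟨b, hb⟩ : ∃ b : ℤ_[p], (b : ℚ_[p]) = (p : ℚ_[p]) ^ n :=
        ⟨⟨(p : ℚ_[p]) ^ n, hpn⟩, rfl⟩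
      have key : (p : ℚ_[p]) ^ n • f (c • x) = (p : ℚ_[p]) ^ n • (c • f x) := by
        have h1 := hZ b (c • x)
        rw [hb] at h1
        have h2 := hZ a x
        rw [ha] at h2
        have hab : (p : ℚ_[p]) ^ n • (c • x) = (c * (p : ℚ_[p]) ^ n) • x := by
          rw [smul_smul, mul_comm]
        rw [hab, h2] at h1
        rw [smul_smul, ← h1, mul_comm]
      have hpne : ((p : ℚ_[p]) ^ n) ≠ 0 := pow_ne_zero _ hp0
      exact smul_right_injective Y hpne key
    -- additivity
    have hadd : ∀ x y : X, f (x + y) = f x + f y := by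
      intro x y
      have hpmem : ‖((p : ℚ_[p]))‖ ≤ 1 := by
        rw [Padic.norm_p]
        exact inv_le_one_of_one_le₀ (le_of_lt hp1)
      obtain ⟨l₁, hl₁⟩ : ∃ l : ℤ_[p], (l : ℚ_[p]) = (p : ℚ_[p]) := ⟨⟨_, hpmem⟩, rfl⟩
      obtain ⟨l₂, hl₂⟩ : ∃ l : ℤ_[p], (l : ℚ_[p]) = 1 - (p : ℚ_[p]) := by
        refine ⟨1 - l₁, ?_⟩; push_cast; rw [hl₁]
      have h1p : (1 : ℚ_[p]) - (p : ℚ_[p]) ≠ 0 := by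
        intro h
        have hp : (p : ℚ_[p]) = 1 := by linear_combination -h
        have : (p : ℕ) = 1 := by exact_mod_cast hp
        exact (Fact.out : p.Prime).one_lt.ne' this
      have h1 := hconv ((p : ℚ_[p])⁻¹ • x) ((1 - (p : ℚ_[p]))⁻¹ • y) l₁ l₂
        (by rw [hl₁, hl₂]; ring)
      rw [hl₁, hl₂] at h1
      rw [smul_smul, mul_inv_cancel₀ hp0, one_smul,
        smul_smul, mul_inv_cancel₀ h1p, one_smul] at h1
      have fx : (p : ℚ_[p]) • f ((p : ℚ_[p])⁻¹ • x) = f x := by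
        rw [hQ, smul_smul, mul_inv_cancel₀ hp0, one_smul]
      have fy : (1 - (p : ℚ_[p])) • f ((1 - (p : ℚ_[p]))⁻¹ • y) = f y := by
        rw [hQ, smul_smul, mul_inv_cancel₀ h1p, one_smul]
      have hg0 : (p : ℚ_[p]) • g 0 + (1 - (p : ℚ_[p])) • g 0 = g 0 := by
        rw [← add_smul]; norm_num
      calc f (x + y) = g (x + y) - g 0 := rfl
        _ = (p : ℚ_[p]) • g ((p : ℚ_[p])⁻¹ • x)
              + (1 - (p : ℚ_[p])) • g ((1 - (p : ℚ_[p]))⁻¹ • y) - g 0 := by rw [h1]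
        _ = (p : ℚ_[p]) • f ((p : ℚ_[p])⁻¹ • x)
              + (1 - (p : ℚ_[p])) • f ((1 - (p : ℚ_[p]))⁻¹ • y) := by
            simp only [hf, smul_sub]
            conv_lhs => rw [← hg0]
            abel
        _ = f x + f y := by rw [fx, fy]
    refine ⟨⟨⟨f, fun a b => hadd a b⟩, fun c x => hQ c x⟩, fun x => ?_⟩
    show g x = g 0 + (g x - g 0); abel
  · rintro ⟨h, hg⟩ x₁ x₂ l₁ l₂ hsum
    rw [hg ((l₁ : ℚ_[p]) • x₁ + (l₂ : ℚ_[p]) • x₂), hg x₁, hg x₂,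
      map_add, map_smul, map_smul, smul_add, smul_add, add_add_add_comm,
      ← add_smul, hsum, one_smul]
end
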